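/- arXiv:2307.00548 — 8 statements merged into one kernel-verified Lean document; each statement's English description precedes it below -/
import Mathlib

section
/- Let D, M be positive integers, let f_1, …, f_M : ℝ^D → ℝ, let S_1, …, S_M be a partition of ℝ^D (pairwise disjoint sets whose union is ℝ^D), and let f : ℝ^D → ℝ be the selector defined by f(x) = f_m(x) whenever x ∈ S_m. Assume that for all indices m₁ ≠ m₂, every point x in the intersection of the frontiers ∂S_{m₁} ∩ ∂S_{m₂} satisfies f_{m₁}(x) = f_{m₂}(x). Then every global minimizer x* of f belongs to the set Φ = (⋃_{m=1}^M {x : f_m is differentiable at x and ∇f_m(x) = 0}) ∪ (⋃_{m=1}^M {x : f_m is not differentiable at x}) ∪ (⋃_{1 ≤ m₁ < m₂ ≤ M} {x : f_{m₁}(x) = f_{m₂}(x)}). -/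
/-- first-order majorization of a global minimizer of a selector function. -/
theorem selector_minimizer_majorization
    (D M : ℕ) (hD : 0 < D) (hM : 0 < M)
    (fm : Fin M → EuclideanSpace ℝ (Fin D) → ℝ)
    (S : Fin M → Set (EuclideanSpace ℝ (Fin D)))
    (hdisj : ∀ m₁ m₂ : Fin M, m₁ ≠ m₂ → Disjoint (S m₁) (S m₂))
    (hcover : (⋃ m, S m) = Set.univ)
    (f : EuclideanSpace ℝ (Fin D) → ℝ)
    (hf : ∀ m : Fin M, ∀ x ∈ S m, f x = fm m x)
    (hbd : ∀ m₁ m₂ : Fin M, m₁ ≠ m₂ →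
      ∀ x ∈ frontier (S m₁) ∩ frontier (S m₂), fm m₁ x = fm m₂ x)
    (xstar : EuclideanSpace ℝ (Fin D))
    (hmin : ∀ x, f xstar ≤ f x) :
    xstar ∈
      (⋃ m : Fin M, {x | DifferentiableAt ℝ (fm m) x ∧ gradient (fm m) x = 0}) ∪
      (⋃ m : Fin M, {x | ¬ DifferentiableAt ℝ (fm m) x}) ∪
      (⋃ m₁ : Fin M, ⋃ m₂ : Fin M, ⋃ (_ : m₁ < m₂), {x | fm m₁ x = fm m₂ x}) := by
  -- xstar lies in some S m
  have hx : xstar ∈ ⋃ m, S m := hcover ▸ Set.mem_univ _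
  obtain ⟨m, hm⟩ := Set.mem_iUnion.mp hx
  by_cases hint : xstar ∈ interior (S m)
  · -- interior case: xstar is a local min of fm m
    by_cases hdiff : DifferentiableAt ℝ (fm m) xstar
    · left; left
      refine Set.mem_iUnion.mpr ⟨m, hdiff, ?_⟩
      have hloc : IsLocalMin (fm m) xstar := by
        have hnhds : S m ∈ nhds xstar := mem_interior_iff_mem_nhds.mp hint
        filter_upwards [hnhds] with y hy
        calc fm m xstar = f xstar := (hf m xstar hm).symm
          _ ≤ f y := hmin y
          _ = fm m y := hf m y hy
      have hf0 : fderiv ℝ (fm m) xstar = 0 := hloc.fderiv_eq_zero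
      unfold gradient
      rw [hf0]
      simp
    · left; right
      exact Set.mem_iUnion.mpr ⟨m, hdiff⟩
  · -- boundary case
    have hfr : xstar ∈ frontier (S m) := ⟨subset_closure hm, hint⟩
    -- xstar ∈ closure of complement = closure of union of other sets
    have hcompl : xstar ∈ closure (S m)ᶜ := by
      rw [closure_compl]
      exact hint
    have hcompl_eq : (S m)ᶜ = ⋃ m' ∈ {m' : Fin M | m' ≠ m}, S m' := by
      ext y
      constructor
      · intro hy
        have : y ∈ ⋃ m', S m' := hcover ▸ Set.mem_univ _
        obtain ⟨m', hm'⟩ := Set.mem_iUnion.mp this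
        have : m' ≠ m := by
          rintro rfl; exact hy hm'
        exact Set.mem_biUnion this hm'
      · intro hy
        obtain ⟨m', hne, hy'⟩ := by simpa using hy
        intro hyS
        exact (hdisj m' m hne).le_bot ⟨hy', hyS⟩
    rw [hcompl_eq] at hcompl
    have : xstar ∈ ⋃ m' ∈ {m' : Fin M | m' ≠ m}, closure (S m') := by
      have hfin : ({m' : Fin M | m' ≠ m}).Finite := Set.toFinite _
      rwa [← hfin.closure_biUnion]
    obtain ⟨m', hne, hcl⟩ := by simpa using this
    have hxnot : xstar ∉ S m' := fun h => (hdisj m m' (Ne.symm hne)).le_bot ⟨hm, h⟩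
    have hfr' : xstar ∈ frontier (S m') :=
      ⟨hcl, fun h => hxnot (interior_subset h)⟩
    have heq : fm m' xstar = fm m xstar := hbd m' m hne xstar ⟨hfr', hfr⟩
    right
    rcases lt_or_gt_of_ne hne with h | h
    · exact Set.mem_iUnion.mpr ⟨m', Set.mem_iUnion.mpr ⟨m, Set.mem_iUnion.mpr ⟨h, heq⟩⟩⟩
    · exact Set.mem_iUnion.mpr ⟨m, Set.mem_iUnion.mpr ⟨m', Set.mem_iUnion.mpr ⟨h, heq.symm⟩⟩⟩
end

section
/- Let f_1, …, f_M : ℝ^D → ℝ be continuous functions, let L ∈ {0, …, M−1}, and let f(x) = p_L(f_1(x), …, f_M(x)) be the L-th percentile of the values f_m(x). Define the partition S_1 = {x : f(x) = f_1(x)}, and for m ≥ 2, S_m = {x : f(x) = f_m(x) and f(x) ≠ f_j(x) for all j < m}. Then for all indices m₁ ≠ m₂, every point x in the intersection of the frontiers ∂S_{m₁} ∩ ∂S_{m₂} satisfies f_{m₁}(x) = f_{m₂}(x). -/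
/-- The `L`-th percentile of `z : Fin M → ℝ`: the `(L+1)`-th largest entry of `z`
(`Tuple.sort z` sorts in nondecreasing order, so index `M - 1 - L` is the
`(L+1)`-th largest). -/
noncomputable def percentile {M : ℕ} (L : ℕ) (z : Fin M → ℝ) : ℝ :=
  if h : L < M then z (Tuple.sort z ⟨M - 1 - L, by omega⟩) else 0

lemma sorted_eq_inf_sup {M : ℕ} (z : Fin M → ℝ) (i : Fin M)
    (hne : ((Finset.univ.powersetCard (i + 1) : Finset (Finset (Fin M))).attach).Nonempty) :
    z (Tuple.sort z i) =
      ((Finset.univ.powersetCard (i + 1) : Finset (Finset (Fin M))).attach).inf' hne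
        (fun S => S.1.sup' (Finset.card_pos.mp (by
          have := (Finset.mem_powersetCard.mp S.2).2; omega)) z) := by
  set σ := Tuple.sort z with hσ
  have hmono : Monotone (z ∘ σ) := Tuple.monotone_sort z
  apply le_antisymm
  · -- z (σ i) ≤ each sup'
    apply Finset.le_inf'
    intro S hS
    obtain ⟨hsub, hcard⟩ := Finset.mem_powersetCard.mp S.2
    -- find j ∈ S with i ≤ σ.symm j
    have : ∃ j ∈ S.1, i ≤ σ.symm j := by
      by_contra h
      push_neg at h
      have himg : S.1.image σ.symm ⊆ Finset.Iio i := by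
        intro k hk
        obtain ⟨j, hj, rfl⟩ := Finset.mem_image.mp hk
        exact Finset.mem_Iio.mpr (h j hj)
      have h1 : (S.1.image σ.symm).card = i + 1 := by
        rw [Finset.card_image_of_injective _ σ.symm.injective, hcard]
      have h2 := Finset.card_le_card himg
      rw [h1, Fin.card_Iio] at h2
      omega
    obtain ⟨j, hj, hij⟩ := this
    calc z (σ i) ≤ z (σ (σ.symm j)) := hmono hij
      _ = z j := by rw [Equiv.apply_symm_apply]
      _ ≤ _ := Finset.le_sup' z hj
  · -- inf' ≤ z (σ i) via S₀ = image σ (Iic i)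
    have hmem : (Finset.Iic i).image σ ∈
        (Finset.univ.powersetCard (i + 1) : Finset (Finset (Fin M))) := by
      apply Finset.mem_powersetCard.mpr
      refine ⟨Finset.subset_univ _, ?_⟩
      rw [Finset.card_image_of_injective _ σ.injective, Fin.card_Iic]
    refine le_trans (Finset.inf'_le _ (Finset.mem_attach _ ⟨_, hmem⟩)) ?_
    apply Finset.sup'_le
    intro j hj
    obtain ⟨k, hk, rfl⟩ := Finset.mem_image.mp hj
    exact hmono (Finset.mem_Iic.mp hk)

lemma percentile_continuous {D M : ℕ} (L : ℕ) (hL : L < M)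
    (fm : Fin M → EuclideanSpace ℝ (Fin D) → ℝ)
    (hcont : ∀ m : Fin M, Continuous (fm m)) :
    Continuous (fun x => percentile L (fun m => fm m x)) := by
  set i : Fin M := ⟨M - 1 - L, by omega⟩ with hi
  have hne : ((Finset.univ.powersetCard (i + 1) : Finset (Finset (Fin M))).attach).Nonempty := by
    rw [Finset.attach_nonempty_iff, Finset.powersetCard_nonempty]
    simp only [Finset.card_univ, Fintype.card_fin]
    omega
  have key : ∀ x, percentile L (fun m => fm m x) =
      ((Finset.univ.powersetCard (i + 1) : Finset (Finset (Fin M))).attach).inf' hne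
        (fun S => S.1.sup' (Finset.card_pos.mp (by
          have := (Finset.mem_powersetCard.mp S.2).2; omega)) (fun m => fm m x)) := by
    intro x
    rw [percentile, dif_pos hL]
    exact sorted_eq_inf_sup (fun m => fm m x) i hne
  simp only [key]
  apply Continuous.finset_inf'_apply
  intro S _
  exact Continuous.finset_sup'_apply _ (fun m _ => hcont m)

/-- for continuous atoms, a percentile objective is constant along the
intersections of the frontiers of its natural selection partition. -/
theorem percentile_selector_constant_on_frontiers
    (D M : ℕ) (fm : Fin M → EuclideanSpace ℝ (Fin D) → ℝ)
    (hcont : ∀ m : Fin M, Continuous (fm m))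
    (L : ℕ) (hL : L < M)
    (f : EuclideanSpace ℝ (Fin D) → ℝ)
    (hfdef : ∀ x, f x = percentile L (fun m => fm m x))
    (S : Fin M → Set (EuclideanSpace ℝ (Fin D)))
    (hSdef : ∀ m : Fin M,
      S m = {x | f x = fm m x ∧ ∀ j : Fin M, j < m → f x ≠ fm j x}) :
    ∀ m₁ m₂ : Fin M, m₁ ≠ m₂ →
      ∀ x ∈ frontier (S m₁) ∩ frontier (S m₂), fm m₁ x = fm m₂ x := by
  have hf : Continuous f := by
    have := percentile_continuous L hL fm hcont
    convert this using 1
    exact funext hfdef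
  have key : ∀ m : Fin M, ∀ x ∈ frontier (S m), f x = fm m x := by
    intro m x hx
    have hcl : closure (S m) ⊆ {x | f x = fm m x} := by
      apply closure_minimal
      · rw [hSdef m]; exact fun y hy => hy.1
      · exact isClosed_eq hf (hcont m)
    exact hcl (frontier_subset_closure hx)
  intro m₁ m₂ _ x hx
  rw [← key m₁ x hx.1, ← key m₂ x hx.2]
end

section
/- Let a_1, …, a_M ∈ ℝ², y_1, …, y_M ≥ 0, and L ∈ {0,…,M−1}. Then every global minimizer x* of the function F(x) = p_L(|y_1 − ‖x − a_1‖|, …, |y_M − ‖x − a_M‖|) belongs to the set Φ = (⋃_{m=1}^M ({a_m} ∪ {x : ‖x − a_m‖ = y_m})) ∪ (⋃_{1 ≤ m₁ < m₂ ≤ M} {x : |y_{m₁} − ‖x − a_{m₁}‖| = |y_{m₂} − ‖x − a_{m₂}‖|}). -/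
lemma percentile_eq_of_order {M : ℕ} (L : ℕ) (hL : L < M) (z w : Fin M → ℝ)
    (hinj : Function.Injective z)
    (h : ∀ i j, z i < z j → w i < w j) :
    percentile L w = w (Tuple.sort z ⟨M - 1 - L, by omega⟩) := by
  have hmono : Monotone (w ∘ Tuple.sort z) := by
    intro i j hij
    rcases eq_or_lt_of_le hij with rfl | hlt
    · exact le_rfl
    · have hne : Tuple.sort z i ≠ Tuple.sort z j :=
        fun hc => absurd ((Tuple.sort z).injective hc) (Nat.ne_of_lt hlt ∘ Fin.val_eq_of_eq)
      have hle : z (Tuple.sort z i) ≤ z (Tuple.sort z j) := Tuple.monotone_sort z hij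
      have hzlt : z (Tuple.sort z i) < z (Tuple.sort z j) :=
        lt_of_le_of_ne hle (fun hc => hne (hinj hc))
      exact le_of_lt (h _ _ hzlt)
  have hcomp : w ∘ Tuple.sort z = w ∘ Tuple.sort w :=
    Tuple.comp_sort_eq_comp_iff_monotone.mpr hmono
  have := congrFun hcomp ⟨M - 1 - L, by omega⟩
  simp only [Function.comp_apply] at this
  rw [percentile, dif_pos hL, ← this]

/-- every global minimizer of the percentile localization objective lies in
the union of the anchors, the measurement circles, and the equal-deviation curves. -/
theorem percentile_localization_minimizer_majorization
    (M : ℕ) (a : Fin M → EuclideanSpace ℝ (Fin 2)) (y : Fin M → ℝ)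
    (hy : ∀ m, 0 ≤ y m) (L : ℕ) (hL : L < M)
    (F : EuclideanSpace ℝ (Fin 2) → ℝ)
    (hF : ∀ x, F x = percentile L (fun m => |y m - ‖x - a m‖|))
    (xstar : EuclideanSpace ℝ (Fin 2))
    (hmin : ∀ x, F xstar ≤ F x) :
    xstar ∈
      (⋃ m : Fin M, ({a m} ∪ {x | ‖x - a m‖ = y m})) ∪
      (⋃ m₁ : Fin M, ⋃ m₂ : Fin M, ⋃ (_ : m₁ < m₂),
        {x | |y m₁ - ‖x - a m₁‖| = |y m₂ - ‖x - a m₂‖|}) := by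
  by_contra hmem
  simp only [Set.mem_union, Set.mem_iUnion, Set.mem_singleton_iff, Set.mem_setOf_eq,
    not_or, not_exists] at hmem
  obtain ⟨h1, h2⟩ := hmem
  set z : Fin M → ℝ := fun m => |y m - ‖xstar - a m‖| with hz
  -- z is injective
  have hzinj : Function.Injective z := by
    intro i j hij
    by_contra hne
    rcases lt_or_gt_of_ne hne with h | h
    · exact h2 i j h hij
    · exact h2 j i h hij.symm
  -- gap δ
  obtain ⟨δ, hδpos, hδ⟩ : ∃ δ > 0, ∀ i j, z i < z j → z i + δ ≤ z j := by
    set S : Finset ℝ := Finset.image (fun p : Fin M × Fin M => z p.2 - z p.1)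
      (Finset.univ.filter fun p : Fin M × Fin M => z p.1 < z p.2) with hS
    by_cases hne : S.Nonempty
    · refine ⟨S.min' hne, ?_, ?_⟩
      · obtain ⟨p, hp, hpe⟩ := Finset.mem_image.mp (S.min'_mem hne)
        have := (Finset.mem_filter.mp hp).2
        linarith [hpe ▸ sub_pos.mpr this]
      · intro i j hij
        have hmem : z j - z i ∈ S := Finset.mem_image.mpr
          ⟨(i, j), Finset.mem_filter.mpr ⟨Finset.mem_univ _, hij⟩, rfl⟩
        have := S.min'_le _ hmem
        linarith
    · refine ⟨1, one_pos, fun i j hij => ?_⟩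
      exact absurd ⟨z j - z i, Finset.mem_image.mpr
        ⟨(i, j), Finset.mem_filter.mpr ⟨Finset.mem_univ _, hij⟩, rfl⟩⟩ hne
  -- the selected index
  set m0 : Fin M := Tuple.sort z ⟨M - 1 - L, by omega⟩ with hm0
  have hFstar : F xstar = z m0 := by
    rw [hF, percentile, dif_pos hL]
  set r : ℝ := ‖xstar - a m0‖ with hr
  have hrpos : 0 < r := by
    rw [hr, norm_pos_iff, sub_ne_zero]
    exact (h1 m0).1
  have hrne : r ≠ y m0 := (h1 m0).2
  -- construct the improved point x'
  -- s : step size, sign : direction (+1 away from anchor if r < y, -1 toward if r > y)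
  obtain ⟨x', hnorm, hclose⟩ :
      ∃ x' : EuclideanSpace ℝ (Fin 2),
        |y m0 - ‖x' - a m0‖| < z m0 ∧ ‖x' - xstar‖ ≤ δ / 3 := by
    rcases lt_or_gt_of_ne hrne with hlt | hgt
    · -- r < y m0 : move away from the anchor
      set s : ℝ := min (δ / 3) (y m0 - r) with hs
      have hspos : 0 < s := lt_min (by linarith) (by linarith)
      refine ⟨xstar + (s / r) • (xstar - a m0), ?_, ?_⟩
      · have hxa : xstar + (s / r) • (xstar - a m0) - a m0 = (1 + s / r) • (xstar - a m0) := by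
          rw [add_smul, one_smul]; abel
        have hnn : (0:ℝ) ≤ 1 + s / r := by positivity
        have hnorm' : ‖xstar + (s / r) • (xstar - a m0) - a m0‖ = r + s := by
          rw [hxa, norm_smul, Real.norm_eq_abs, abs_of_nonneg hnn, ← hr]
          field_simp
        rw [hnorm']
        have hsle : s ≤ y m0 - r := min_le_right _ _
        have h1' : |y m0 - (r + s)| = y m0 - (r + s) := abs_of_nonneg (by linarith)
        have h2' : z m0 = y m0 - r := by
          rw [hz]; exact abs_of_nonneg (by linarith)
        rw [h1', h2']; linarith
      · have : xstar + (s / r) • (xstar - a m0) - xstar = (s / r) • (xstar - a m0) := by abel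
        rw [this, norm_smul, Real.norm_eq_abs, abs_of_nonneg (by positivity), ← hr]
        have : s / r * r = s := by field_simp
        rw [this]; exact min_le_left _ _
    · -- r > y m0 : move toward the anchor
      set s : ℝ := min (δ / 3) (r - y m0) with hs
      have hspos : 0 < s := lt_min (by linarith) (by linarith)
      have hsler : s ≤ r - y m0 := min_le_right _ _
      refine ⟨xstar - (s / r) • (xstar - a m0), ?_, ?_⟩
      · have hxa : xstar - (s / r) • (xstar - a m0) - a m0 = (1 - s / r) • (xstar - a m0) := by
          rw [sub_smul, one_smul]; abel
        have hnn : (0:ℝ) ≤ 1 - s / r := by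
          rw [sub_nonneg, div_le_one hrpos]
          have := hy m0; linarith
        have hnorm' : ‖xstar - (s / r) • (xstar - a m0) - a m0‖ = r - s := by
          rw [hxa, norm_smul, Real.norm_eq_abs, abs_of_nonneg hnn, ← hr]
          field_simp
        rw [hnorm']
        have h1' : |y m0 - (r - s)| = (r - s) - y m0 := by
          rw [abs_sub_comm]; exact abs_of_nonneg (by linarith)
        have h2' : z m0 = r - y m0 := by
          have hzz : z m0 = |y m0 - r| := rfl
          rw [hzz, abs_sub_comm]; exact abs_of_nonneg (by linarith)
        rw [h1', h2']; linarith
      · have : xstar - (s / r) • (xstar - a m0) - xstar = -((s / r) • (xstar - a m0)) := by abel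
        rw [this, norm_neg, norm_smul, Real.norm_eq_abs, abs_of_nonneg (by positivity), ← hr]
        have : s / r * r = s := by field_simp
        rw [this]; exact min_le_left _ _
  -- w : the deviations at x'
  set w : Fin M → ℝ := fun m => |y m - ‖x' - a m‖| with hw
  -- each coordinate moves by at most δ/3
  have hLip : ∀ m, |w m - z m| ≤ δ / 3 := by
    intro m
    have h1' : |w m - z m| ≤ |‖x' - a m‖ - ‖xstar - a m‖| := by
      calc |w m - z m| = |(|y m - ‖x' - a m‖|) - (|y m - ‖xstar - a m‖|)| := rfl
        _ ≤ |(y m - ‖x' - a m‖) - (y m - ‖xstar - a m‖)| := abs_abs_sub_abs_le_abs_sub _ _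
        _ = |‖xstar - a m‖ - ‖x' - a m‖| := congrArg abs (by ring)
        _ = |‖x' - a m‖ - ‖xstar - a m‖| := abs_sub_comm _ _
    have h2' : |‖x' - a m‖ - ‖xstar - a m‖| ≤ ‖x' - xstar‖ := by
      have := abs_norm_sub_norm_le (x' - a m) (xstar - a m)
      simpa using this
    linarith
  have horder : ∀ i j, z i < z j → w i < w j := by
    intro i j hij
    have hi := abs_le.mp (hLip i)
    have hj := abs_le.mp (hLip j)
    have := hδ i j hij
    linarith
  have hFx' : F x' = w m0 := by
    rw [hF]
    exact percentile_eq_of_order L hL z w hzinj horder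
  have : F x' < F xstar := by
    rw [hFx', hFstar]
    exact hnorm
  exact absurd (hmin x') (not_le.mpr this)
end

section
/- Let a_1, …, a_M ∈ ℝ², y_1, …, y_M ≥ 0, L ∈ {0,…,M−1}, and let F(x) = p_L(|y_1 − ‖x − a_1‖|, …, |y_M − ‖x − a_M‖|). Let Φ = (⋃_{m=1}^M ({a_m} ∪ {x : ‖x − a_m‖ = y_m})) ∪ (⋃_{1 ≤ m₁ < m₂ ≤ M} {x : |y_{m₁} − ‖x − a_{m₁}‖| = |y_{m₂} − ‖x − a_{m₂}‖|}). Then F attains its global minimum over ℝ², and the infimum of F over ℝ² equals the infimum of F over Φ, i.e., min_{x ∈ ℝ²} F(x) = inf_{x ∈ Φ} F(x). -/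
open Finset


lemma percentile_mem {M L : ℕ} (hL : L < M) (z : Fin M → ℝ) :
    ∃ k, percentile L z = z k := by
  rw [percentile, dif_pos hL]; exact ⟨_, rfl⟩

/-- A1: any (L+1)-subset contains an index whose value is ≤ the percentile. -/
lemma exists_le_percentile {M L : ℕ} (hL : L < M) (z : Fin M → ℝ)
    (S : Finset (Fin M)) (hS : S.card = L + 1) :
    ∃ m ∈ S, z m ≤ percentile L z := by
  set σ := Tuple.sort z with hσ
  have hmono : Monotone (z ∘ σ) := Tuple.monotone_sort z
  set i₀ : Fin M := ⟨M - 1 - L, by omega⟩ with hi₀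
  have hp : percentile L z = z (σ i₀) := by rw [percentile, dif_pos hL]
  set T : Finset (Fin M) := S.image σ.symm with hT
  have hTcard : T.card = L + 1 := by
    rw [hT, Finset.card_image_of_injective _ σ.symm.injective, hS]
  have : ∃ i ∈ T, i ≤ i₀ := by
    by_contra h
    push_neg at h
    have hsub : T ⊆ Finset.Ioi i₀ := fun i hi => Finset.mem_Ioi.mpr (h i hi)
    have := Finset.card_le_card hsub
    rw [hTcard, Fin.card_Ioi] at this
    simp only [hi₀] at this
    omega
  obtain ⟨i, hiT, hii⟩ := this
  obtain ⟨m, hmS, hm⟩ := Finset.mem_image.mp hiT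
  refine ⟨m, hmS, ?_⟩
  have : z (σ i) ≤ z (σ i₀) := hmono hii
  rw [hp]
  rw [← hm] at this
  simpa using this

/-- A2: there is an (L+1)-subset on which all values are ≥ the percentile. -/
lemma exists_subset_percentile_le {M L : ℕ} (hL : L < M) (z : Fin M → ℝ) :
    ∃ S : Finset (Fin M), S.card = L + 1 ∧ ∀ m ∈ S, percentile L z ≤ z m := by
  set σ := Tuple.sort z with hσ
  have hmono : Monotone (z ∘ σ) := Tuple.monotone_sort z
  set i₀ : Fin M := ⟨M - 1 - L, by omega⟩ with hi₀
  have hp : percentile L z = z (σ i₀) := by rw [percentile, dif_pos hL]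
  refine ⟨(Finset.Ici i₀).image σ, ?_, ?_⟩
  · rw [Finset.card_image_of_injective _ σ.injective, Fin.card_Ici]
    simp only [hi₀]; omega
  · intro m hm
    obtain ⟨i, hi, rfl⟩ := Finset.mem_image.mp hm
    rw [hp]
    exact hmono (Finset.mem_Ici.mp hi)

/-- Lipschitz-type bound for the percentile. -/
lemma percentile_le_percentile_add {M L : ℕ} (hL : L < M) (z z' : Fin M → ℝ)
    (c : ℝ) (h : ∀ m, z' m ≤ z m + c) :
    percentile L z' ≤ percentile L z + c := by
  obtain ⟨S, hScard, hS⟩ := exists_subset_percentile_le hL z'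
  obtain ⟨m, hmS, hm⟩ := exists_le_percentile hL z S hScard
  calc percentile L z' ≤ z' m := hS m hmS
    _ ≤ z m + c := h m
    _ ≤ percentile L z + c := by linarith

/-- D: rank characterization of the percentile. -/
lemma percentile_eq_of_card {M L : ℕ} (hL : L < M) (z : Fin M → ℝ) (k : Fin M)
    (hgt : (univ.filter (fun m => z k < z m)).card = L)
    (hlt : (univ.filter (fun m => z m < z k)).card = M - 1 - L) :
    percentile L z = z k := by
  have habove : ∃ m, percentile L z ≤ z m ∧ z m ≤ z k := by
    obtain ⟨S, hScard, hS⟩ := exists_subset_percentile_le hL z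
    have : ∃ m ∈ S, ¬ (z k < z m) := by
      by_contra h
      push_neg at h
      have hsub : S ⊆ univ.filter (fun m => z k < z m) := fun m hm =>
        Finset.mem_filter.mpr ⟨Finset.mem_univ m, h m hm⟩
      have := Finset.card_le_card hsub
      omega
    obtain ⟨m, hmS, hm⟩ := this
    exact ⟨m, hS m hmS, le_of_not_gt hm⟩
  have hbelow : z k ≤ percentile L z := by
    set S₀ := univ.filter (fun m => z k ≤ z m) with hS₀
    have hcomp := Finset.card_filter_add_card_filter_not
      (s := (univ : Finset (Fin M))) (p := fun m => z m < z k)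
    have hS₀card : S₀.card = L + 1 := by
      have : S₀ = univ.filter (fun m => ¬ (z m < z k)) := by
        apply Finset.filter_congr; intro m _; simp [not_lt]
      rw [this]
      simp only [Finset.card_univ, Fintype.card_fin] at hcomp
      omega
    obtain ⟨m, hmS, hm⟩ := exists_le_percentile hL z S₀ hS₀card
    have := (Finset.mem_filter.mp hmS).2
    linarith
  obtain ⟨m, hm1, hm2⟩ := habove
  linarith

/-- E: for an injective tuple, the percentile is the entry of exact rank. -/
lemma exists_rank_of_injective {M L : ℕ} (hL : L < M) (z : Fin M → ℝ)
    (hz : Function.Injective z) :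
    ∃ k, percentile L z = z k ∧
      (univ.filter (fun m => z k < z m)).card = L ∧
      (univ.filter (fun m => z m < z k)).card = M - 1 - L := by
  set σ := Tuple.sort z with hσ
  have hmono : Monotone (z ∘ σ) := Tuple.monotone_sort z
  have hsm : StrictMono (z ∘ σ) :=
    hmono.strictMono_of_injective (hz.comp σ.injective)
  set i₀ : Fin M := ⟨M - 1 - L, by omega⟩ with hi₀
  refine ⟨σ i₀, by rw [percentile, dif_pos hL], ?_, ?_⟩
  · have himg : (univ.filter (fun m => z (σ i₀) < z m))
        = (univ.filter (fun i => i₀ < i)).image σ := by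
      ext m
      simp only [Finset.mem_filter, Finset.mem_univ, true_and, Finset.mem_image]
      constructor
      · intro h
        refine ⟨σ.symm m, ?_, by simp⟩
        have := (hsm.lt_iff_lt (a := i₀) (b := σ.symm m))
        simp only [Function.comp_apply, Equiv.apply_symm_apply] at this
        exact this.mp h
      · rintro ⟨i, hi, rfl⟩
        exact hsm hi
    rw [himg, Finset.card_image_of_injective _ σ.injective,
      Finset.filter_lt_eq_Ioi, Fin.card_Ioi]
    simp only [hi₀]; omega
  · have himg : (univ.filter (fun m => z m < z (σ i₀)))
        = (univ.filter (fun i => i < i₀)).image σ := by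
      ext m
      simp only [Finset.mem_filter, Finset.mem_univ, true_and, Finset.mem_image]
      constructor
      · intro h
        refine ⟨σ.symm m, ?_, by simp⟩
        have := (hsm.lt_iff_lt (a := σ.symm m) (b := i₀))
        simp only [Function.comp_apply, Equiv.apply_symm_apply] at this
        exact this.mp h
      · rintro ⟨i, hi, rfl⟩
        exact hsm hi
    rw [himg, Finset.card_image_of_injective _ σ.injective,
      Finset.filter_gt_eq_Iio, Fin.card_Iio]

/-- the percentile localization objective attains its global minimum, and
its infimum over the plane equals its infimum over the majorizer set `Φ`. -/
theorem percentile_localization_attains_min_and_reduces_to_majorizer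
    (M : ℕ) (a : Fin M → EuclideanSpace ℝ (Fin 2)) (y : Fin M → ℝ)
    (hy : ∀ m, 0 ≤ y m) (L : ℕ) (hL : L < M)
    (F : EuclideanSpace ℝ (Fin 2) → ℝ)
    (hF : ∀ x, F x = percentile L (fun m => |y m - ‖x - a m‖|))
    (Φ : Set (EuclideanSpace ℝ (Fin 2)))
    (hΦ : Φ =
      (⋃ m : Fin M, ({a m} ∪ {x | ‖x - a m‖ = y m})) ∪
      (⋃ m₁ : Fin M, ⋃ m₂ : Fin M, ⋃ (_ : m₁ < m₂),
        {x | |y m₁ - ‖x - a m₁‖| = |y m₂ - ‖x - a m₂‖|})) :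
    (∃ xstar, ∀ x, F xstar ≤ F x) ∧ sInf (Set.range F) = sInf (F '' Φ) := by
  have hM : 0 < M := lt_of_le_of_lt (Nat.zero_le L) hL
  -- Lipschitz bound
  have hLip : ∀ x x' : EuclideanSpace ℝ (Fin 2), F x ≤ F x' + ‖x - x'‖ := by
    intro x x'
    rw [hF x, hF x']
    apply percentile_le_percentile_add hL
    intro m
    have h1 : |‖x' - a m‖ - ‖x - a m‖| ≤ ‖x - x'‖ := by
      have := abs_norm_sub_norm_le (x' - a m) (x - a m)
      have he : (x' - a m) - (x - a m) = x' - x := by abel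
      rw [he] at this
      rwa [norm_sub_rev x x']
    calc |y m - ‖x - a m‖|
        = |(y m - ‖x' - a m‖) + (‖x' - a m‖ - ‖x - a m‖)| := by ring_nf
      _ ≤ |y m - ‖x' - a m‖| + |‖x' - a m‖ - ‖x - a m‖| := abs_add_le _ _
      _ ≤ |y m - ‖x' - a m‖| + ‖x - x'‖ := by linarith
  have hcont : Continuous F := by
    have : LipschitzWith 1 F := by
      apply LipschitzWith.of_dist_le_mul
      intro x x'
      rw [Real.dist_eq, dist_eq_norm, NNReal.coe_one, one_mul]
      rw [abs_le]
      constructor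
      · have := hLip x' x
        rw [norm_sub_rev] at this
        linarith
      · have := hLip x x'
        linarith
    exact this.continuous
  -- nonnegativity
  have hF0 : ∀ x, 0 ≤ F x := by
    intro x
    rw [hF x]
    obtain ⟨k, hk⟩ := percentile_mem hL (fun m => |y m - ‖x - a m‖|)
    rw [hk]; positivity
  -- growth
  set C : ℝ := Finset.univ.sup' (Finset.univ_nonempty_iff.mpr ⟨⟨0, hM⟩⟩)
      (fun m => ‖a m‖ + y m) with hC
  have hgrow : ∀ x : EuclideanSpace ℝ (Fin 2), ‖x‖ - C ≤ F x := by
    intro x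
    rw [hF x]
    obtain ⟨k, hk⟩ := percentile_mem hL (fun m => |y m - ‖x - a m‖|)
    rw [hk]
    have h1 : ‖x‖ - ‖a k‖ ≤ ‖x - a k‖ := by
      have := norm_sub_norm_le x (a k)
      linarith
    have h2 : ‖x - a k‖ - y k ≤ |y k - ‖x - a k‖| := by
      rw [abs_sub_comm]
      exact le_abs_self _
    have h3 : ‖a k‖ + y k ≤ C := by
      rw [hC]; exact Finset.le_sup' (fun m => ‖a m‖ + y m) (Finset.mem_univ k)
    linarith
  -- existence of a global minimizer
  obtain ⟨xstar, hxstar⟩ : ∃ xstar, ∀ x, F xstar ≤ F x := by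
    set R : ℝ := C + F 0 + 1 with hR
    have hKcpt : IsCompact (Metric.closedBall (0 : EuclideanSpace ℝ (Fin 2)) R) :=
      isCompact_closedBall _ _
    have h0C : 0 ≤ C := by
      have := Finset.le_sup' (fun m => ‖a m‖ + y m) (Finset.mem_univ (⟨0, hM⟩ : Fin M))
      have h' := norm_nonneg (a (⟨0, hM⟩ : Fin M))
      linarith [hy ⟨0, hM⟩]
    have hKne : (Metric.closedBall (0 : EuclideanSpace ℝ (Fin 2)) R).Nonempty :=
      ⟨0, by simp; nlinarith [hF0 0]⟩
    obtain ⟨x0, hx0K, hx0min⟩ := hKcpt.exists_isMinOn hKne hcont.continuousOn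
    refine ⟨x0, fun x => ?_⟩
    by_cases hx : x ∈ Metric.closedBall (0 : EuclideanSpace ℝ (Fin 2)) R
    · exact hx0min hx
    · have hxn : R < ‖x‖ := by
        simp only [Metric.mem_closedBall, dist_zero_right, not_le] at hx
        exact hx
      have h1 : F x0 ≤ F 0 := hx0min (by simp; nlinarith [hF0 0])
      have := hgrow x
      nlinarith
  -- every global minimizer lies in Φ
  have hminΦ : ∀ x0 : EuclideanSpace ℝ (Fin 2), (∀ x, F x0 ≤ F x) → x0 ∈ Φ := by
    intro x0 hmin
    by_contra hx0
    rw [hΦ] at hx0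
    simp only [Set.mem_union, Set.mem_iUnion, Set.mem_singleton_iff,
      Set.singleton_union, Set.mem_insert_iff, Set.mem_setOf_eq, not_or, not_exists] at hx0
    obtain ⟨h1, h2⟩ := hx0
    set z : Fin M → ℝ := fun m => |y m - ‖x0 - a m‖| with hz
    have hzinj : Function.Injective z := by
      intro m₁ m₂ h
      by_contra hne
      rcases lt_or_gt_of_ne hne with hlt | hgt
      · exact h2 m₁ m₂ hlt h
      · exact h2 m₂ m₁ hgt h.symm
    obtain ⟨k, hk, hgtcard, hltcard⟩ := exists_rank_of_injective hL z hzinj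
    set r : ℝ := ‖x0 - a k‖ with hr
    have hrpos : 0 < r := by
      rw [hr, norm_pos_iff, sub_ne_zero]
      exact fun h => (h1 k).1 h
    have hzkpos : 0 < z k := by
      rw [hz]
      simp only [abs_pos, sub_ne_zero]
      exact fun h => (h1 k).2 h.symm
    -- step size
    set T : Finset ℝ := insert (z k) (insert r
      ((Finset.univ.filter (fun m => z m < z k)).image (fun m => z k - z m))) with hT
    have hTne : T.Nonempty := ⟨z k, by simp [hT]⟩
    have hTpos : ∀ b ∈ T, 0 < b := by
      intro b hb
      rw [hT] at hb
      simp only [Finset.mem_insert, Finset.mem_image, Finset.mem_filter] at hb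
      rcases hb with rfl | rfl | ⟨m, ⟨_, hm⟩, rfl⟩
      · exact hzkpos
      · exact hrpos
      · linarith
    set t : ℝ := T.min' hTne / 3 with ht
    have htpos : 0 < t := by
      have := hTpos _ (T.min'_mem hTne)
      rw [ht]; linarith
    have htzk : t < z k := by
      have := T.min'_le (z k) (by simp [hT])
      rw [ht]; linarith
    have htr : t < r := by
      have := T.min'_le r (by simp [hT])
      rw [ht]; linarith
    have htgap : ∀ m, z m < z k → 2 * t < z k - z m := by
      intro m hm
      have hmem : z k - z m ∈ T := by
        rw [hT]
        simp only [Finset.mem_insert, Finset.mem_image, Finset.mem_filter]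
        exact Or.inr (Or.inr ⟨m, ⟨Finset.mem_univ m, hm⟩, rfl⟩)
      have := T.min'_le _ hmem
      have hpos : 0 < z k - z m := by linarith
      rw [ht]; linarith
    -- choose the sign of the step
    obtain ⟨s, hsabs, hsval⟩ : ∃ s : ℝ, |s| = t ∧ |y k - (r + s)| = z k - t := by
      have hzc : z k = |y k - r| := rfl
      rcases lt_or_gt_of_ne (fun h => (h1 k).2 h) with hc | hc
      · -- r < y k
        rw [← hr] at hc
        refine ⟨t, abs_of_pos htpos, ?_⟩
        have hzkval : z k = y k - r := by
          rw [hzc]; exact abs_of_pos (by linarith)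
        rw [abs_of_pos (by linarith)]
        linarith
      · -- y k < r
        rw [← hr] at hc
        refine ⟨-t, by rw [abs_neg]; exact abs_of_pos htpos, ?_⟩
        have hzkval : z k = r - y k := by
          rw [hzc, abs_of_neg (by linarith)]; ring
        rw [abs_of_neg (by linarith)]
        linarith
    set x' : EuclideanSpace ℝ (Fin 2) := x0 + (s / r) • (x0 - a k) with hx'
    have hxx' : ‖x' - x0‖ = t := by
      have he : x' - x0 = (s / r) • (x0 - a k) := by rw [hx']; abel
      rw [he, norm_smul, Real.norm_eq_abs, abs_div, hsabs, abs_of_pos hrpos, ← hr]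
      field_simp
    have hx'ak : ‖x' - a k‖ = r + s := by
      have he : x' - a k = (1 + s / r) • (x0 - a k) := by
        rw [hx']
        rw [add_smul, one_smul]
        abel
      have hspos : 0 < 1 + s / r := by
        have : |s / r| < 1 := by
          rw [abs_div, hsabs, abs_of_pos hrpos, div_lt_one hrpos]
          exact htr
        have := (abs_lt.mp this).1
        linarith
      rw [he, norm_smul, Real.norm_eq_abs, abs_of_pos hspos, ← hr]
      field_simp
    set z' : Fin M → ℝ := fun m => |y m - ‖x' - a m‖| with hz'
    have hz'k : z' k = z k - t := by
      rw [hz']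
      simp only
      rw [hx'ak]
      exact hsval
    have hz'near : ∀ m, |z' m - z m| ≤ t := by
      intro m
      have h1' : |‖x' - a m‖ - ‖x0 - a m‖| ≤ ‖x' - x0‖ := by
        have := abs_norm_sub_norm_le (x' - a m) (x0 - a m)
        have he : (x' - a m) - (x0 - a m) = x' - x0 := by abel
        rwa [he] at this
      have h2' : |z' m - z m| ≤ |(y m - ‖x' - a m‖) - (y m - ‖x0 - a m‖)| :=
        abs_abs_sub_abs_le_abs_sub _ _
      have he : (y m - ‖x' - a m‖) - (y m - ‖x0 - a m‖) = -(‖x' - a m‖ - ‖x0 - a m‖) := by ring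
      rw [he, abs_neg] at h2'
      rw [hxx'] at h1'
      linarith
    -- the filter sets are unchanged
    have hset1 : Finset.univ.filter (fun m => z' k < z' m)
        = Finset.univ.filter (fun m => z k < z m) := by
      ext m
      simp only [Finset.mem_filter, Finset.mem_univ, true_and]
      have hnear := hz'near m
      rw [abs_le] at hnear
      constructor
      · intro h
        by_contra hcon
        push_neg at hcon
        rcases eq_or_lt_of_le hcon with heq | hlt'
        · have : m = k := hzinj heq
          subst this
          exact lt_irrefl _ h
        · have := htgap m hlt'
          rw [hz'k] at h
          linarith
      · intro h
        rw [hz'k]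
        linarith
    have hset2 : Finset.univ.filter (fun m => z' m < z' k)
        = Finset.univ.filter (fun m => z m < z k) := by
      ext m
      simp only [Finset.mem_filter, Finset.mem_univ, true_and]
      have hnear := hz'near m
      rw [abs_le] at hnear
      constructor
      · intro h
        by_contra hcon
        push_neg at hcon
        rcases eq_or_lt_of_le hcon with heq | hlt'
        · have : k = m := hzinj heq
          subst this
          exact lt_irrefl _ h
        · rw [hz'k] at h
          linarith
      · intro h
        have := htgap m h
        rw [hz'k]
        linarith
    have hFx' : F x' = z k - t := by
      rw [hF x']
      have : percentile L z' = z' k :=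
        percentile_eq_of_card hL z' k (by rw [hset1]; exact hgtcard)
          (by rw [hset2]; exact hltcard)
      rw [← hz'] at *
      rw [this, hz'k]
    have hFx0 : F x0 = z k := by rw [hF x0, ← hz, hk]
    have := hmin x'
    rw [hFx', hFx0] at this
    linarith
  -- conclude
  have hxstarΦ : xstar ∈ Φ := hminΦ xstar hxstar
  refine ⟨⟨xstar, hxstar⟩, ?_⟩
  have hbdd : BddBelow (Set.range F) := ⟨0, by rintro _ ⟨x, rfl⟩; exact hF0 x⟩
  have hne1 : (Set.range F).Nonempty := ⟨F 0, 0, rfl⟩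
  have hne2 : (F '' Φ).Nonempty := ⟨F xstar, xstar, hxstarΦ, rfl⟩
  have hsub : F '' Φ ⊆ Set.range F := by
    rintro _ ⟨x, _, rfl⟩; exact ⟨x, rfl⟩
  apply le_antisymm
  · exact csInf_le_csInf hbdd hne2 hsub
  · have h1 : sInf (F '' Φ) ≤ F xstar :=
      csInf_le (hbdd.mono hsub) ⟨xstar, hxstarΦ, rfl⟩
    have h2 : F xstar ≤ sInf (Set.range F) :=
      le_csInf hne1 (by rintro _ ⟨x, rfl⟩; exact hxstar x)
    linarith
end

section
/- Define f_1, f_2 : ℝ → ℝ by f_1(x) = |x + 2| if x < −1 and f_1(x) = 0 if x ≥ −1; f_2(x) = x + 1 if x < −1/2 and f_2(x) = 1/2 if x ≥ −1/2. Let S_1 = (−∞, −3/2), S_2 = [−3/2, +∞), and let f(x) = f_1(x) for x ∈ S_1 and f(x) = f_2(x) for x ∈ S_2. Then the set of global minimizers of f equals the singleton {−3/2}, the set Φ := {x : f_1 or f_2 is differentiable at x with zero derivative} ∪ {x : f_1 or f_2 is not differentiable at x} ∪ {x : f_1(x) = f_2(x)} equals {−2} ∪ [−1, +∞), and −3/2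 ∉ Φ; hence the set of minimizers of f is not contained in Φ. -/
private lemma loc_eq {g h : ℝ → ℝ} {s : Set ℝ} {x : ℝ} (hs : IsOpen s) (hx : x ∈ s)
    (hgh : ∀ y ∈ s, g y = h y) : g =ᶠ[nhds x] h :=
  Filter.eventuallyEq_of_mem (hs.mem_nhds hx) hgh

/-- counterexample showing the first-order majorizer can miss the
minimizer when the atoms disagree on the common frontier of the selection sets. -/
theorem selector_counterexample
    (f₁ f₂ f : ℝ → ℝ)
    (hf₁ : ∀ x : ℝ, f₁ x = if x < -1 then |x + 2| else 0)
    (hf₂ : ∀ x : ℝ, f₂ x = if x < -(1/2 : ℝ) then x + 1 else 1/2)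
    (hfS₁ : ∀ x ∈ Set.Iio (-(3/2 : ℝ)), f x = f₁ x)
    (hfS₂ : ∀ x ∈ Set.Ici (-(3/2 : ℝ)), f x = f₂ x)
    (Φ : Set ℝ)
    (hΦ : Φ = {x | (DifferentiableAt ℝ f₁ x ∧ deriv f₁ x = 0) ∨
                   (DifferentiableAt ℝ f₂ x ∧ deriv f₂ x = 0)} ∪
               {x | ¬ DifferentiableAt ℝ f₁ x ∨ ¬ DifferentiableAt ℝ f₂ x} ∪
               {x | f₁ x = f₂ x}) :
    {x : ℝ | ∀ v, f x ≤ f v} = {-(3/2 : ℝ)} ∧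
    Φ = {(-2 : ℝ)} ∪ Set.Ici (-1 : ℝ) ∧
    (-(3/2 : ℝ)) ∉ Φ ∧
    ¬ ({x : ℝ | ∀ v, f x ≤ f v} ⊆ Φ) := by
  have h32 : f (-(3/2 : ℝ)) = -(1/2 : ℝ) := by
    rw [hfS₂ _ (Set.mem_Ici.mpr (le_refl _)), hf₂]
    norm_num
  -- minimizer set
  have hmin : {x : ℝ | ∀ v, f x ≤ f v} = {-(3/2 : ℝ)} := by
    ext x
    simp only [Set.mem_setOf_eq, Set.mem_singleton_iff]
    constructor
    · intro h
      by_contra hx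
      have hle := h (-(3/2 : ℝ))
      rw [h32] at hle
      rcases lt_or_ge x (-(3/2 : ℝ)) with hx1 | hx1
      · rw [hfS₁ _ hx1, hf₁, if_pos (by linarith)] at hle
        have := abs_nonneg (x + 2)
        linarith
      · rw [hfS₂ _ hx1, hf₂] at hle
        rcases lt_or_ge x (-(1/2 : ℝ)) with h2 | h2
        · rw [if_pos h2] at hle
          have : -(3/2 : ℝ) < x := lt_of_le_of_ne hx1 (Ne.symm hx)
          linarith
        · rw [if_neg (not_lt.2 h2)] at hle
          linarith
    · rintro rfl v
      rw [h32]
      rcases lt_or_ge v (-(3/2 : ℝ)) with hv | hv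
      · rw [hfS₁ _ hv, hf₁, if_pos (by linarith)]
        have := abs_nonneg (v + 2)
        linarith
      · rw [hfS₂ _ hv, hf₂]
        split_ifs with h <;> linarith
  -- Φ
  have hΦeq : Φ = {(-2 : ℝ)} ∪ Set.Ici (-1 : ℝ) := by
    rw [hΦ]
    ext x
    simp only [Set.mem_union, Set.mem_setOf_eq, Set.mem_singleton_iff, Set.mem_Ici]
    constructor
    · intro h
      by_contra hc
      push_neg at hc
      obtain ⟨hne2, hlt1⟩ := hc
      -- f₂ is locally y + 1 near x
      have hf₂loc : f₂ =ᶠ[nhds x] fun y => y + 1 :=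
        loc_eq isOpen_Iio (show x ∈ Set.Iio (-(1/2 : ℝ)) by simp only [Set.mem_Iio]; linarith)
          (fun y hy => by rw [hf₂, if_pos (Set.mem_Iio.mp hy)])
      have hd₂ : DifferentiableAt ℝ f₂ x :=
        hf₂loc.differentiableAt_iff.mpr (by fun_prop)
      have hder₂ : deriv f₂ x = 1 := by
        rw [hf₂loc.deriv_eq]
        simp
      -- f₁ is locally linear near x with deriv ±1
      have hd₁ : DifferentiableAt ℝ f₁ x ∧ (deriv f₁ x = 1 ∨ deriv f₁ x = -1) := by
        rcases lt_or_gt_of_ne hne2 with h2 | h2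
        · have hloc : f₁ =ᶠ[nhds x] fun y => -(y + 2) :=
            loc_eq isOpen_Iio (show x ∈ Set.Iio (-2 : ℝ) from h2)
              (fun y hy => by
                rw [hf₁, if_pos (by simp only [Set.mem_Iio] at hy; linarith)]
                rw [abs_of_nonpos (by simp only [Set.mem_Iio] at hy; linarith)])
          refine ⟨hloc.differentiableAt_iff.mpr (by fun_prop), Or.inr ?_⟩
          rw [hloc.deriv_eq]
          simp
        · have hloc : f₁ =ᶠ[nhds x] fun y => y + 2 :=
            loc_eq isOpen_Ioo (show x ∈ Set.Ioo (-2 : ℝ) (-1 : ℝ) from ⟨h2, hlt1⟩)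
              (fun y hy => by
                rw [hf₁, if_pos hy.2, abs_of_nonneg (by linarith [hy.1])])
          refine ⟨hloc.differentiableAt_iff.mpr (by fun_prop), Or.inl ?_⟩
          rw [hloc.deriv_eq]
          simp
      -- f₁ x ≠ f₂ x
      have hne : f₁ x ≠ f₂ x := by
        rw [hf₁, hf₂, if_pos hlt1, if_pos (by linarith)]
        rcases le_or_gt (-2 : ℝ) x with h2 | h2
        · rw [abs_of_nonneg (by linarith)]; intro hh; linarith
        · rw [abs_of_nonpos (by linarith)]; intro hh
          have : x = -(3/2 : ℝ) := by linarith
          linarith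
      rcases h with (h | h) | h
      · rcases h with ⟨_, hz⟩ | ⟨_, hz⟩
        · rcases hd₁.2 with h1 | h1 <;> rw [h1] at hz <;> norm_num at hz
        · rw [hder₂] at hz; norm_num at hz
      · rcases h with h | h
        · exact h hd₁.1
        · exact h hd₂
      · exact hne h
    · rintro (rfl | hge)
      · -- x = -2 : f₁ not differentiable
        refine Or.inl (Or.inr (Or.inl ?_))
        intro hd
        have hloc : f₁ =ᶠ[nhds (-2 : ℝ)] fun y => |y + 2| :=
          loc_eq isOpen_Iio (show (-2 : ℝ) ∈ Set.Iio (-1 : ℝ) by norm_num)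
            (fun y hy => by rw [hf₁, if_pos (Set.mem_Iio.mp hy)])
        have habs : DifferentiableAt ℝ (fun y : ℝ => |y + 2|) (-2 : ℝ) :=
          hloc.differentiableAt_iff.mp hd
        have : DifferentiableAt ℝ (fun y : ℝ => |y|) (0 : ℝ) := by
          have hc : DifferentiableAt ℝ (fun y : ℝ => y - 2) (0 : ℝ) := by fun_prop
          rw [show (-2 : ℝ) = (0 : ℝ) - 2 by norm_num] at habs
          have := habs.comp (0 : ℝ) hc
          have h2 : (fun y : ℝ => |y + 2|) ∘ (fun y : ℝ => y - 2) = fun y : ℝ => |y| := by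
            funext y; simp
          rwa [h2] at this
        exact not_differentiableAt_abs_zero this
      · rcases eq_or_lt_of_le hge with rfl | hgt
        · exact Or.inr (by rw [hf₁, hf₂]; norm_num)
        · -- x > -1 : f₁ locally 0
          have hloc : f₁ =ᶠ[nhds x] fun _ => (0 : ℝ) :=
            loc_eq isOpen_Ioi (show x ∈ Set.Ioi (-1 : ℝ) from hgt)
              (fun y hy => by
                rw [hf₁, if_neg (not_lt.2 (le_of_lt hy))])
          refine Or.inl (Or.inl (Or.inl ⟨hloc.differentiableAt_iff.mpr (by fun_prop), ?_⟩))
          rw [hloc.deriv_eq]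
          simp
  -- -3/2 ∉ Φ and conclusion
  have hnotin : (-(3/2 : ℝ)) ∉ Φ := by
    rw [hΦeq]
    simp only [Set.mem_union, Set.mem_singleton_iff, Set.mem_Ici]
    push_neg
    constructor <;> norm_num
  refine ⟨hmin, hΦeq, hnotin, ?_⟩
  intro hsub
  exact hnotin (hsub (by rw [hmin]; exact rfl))
end

section
/- Let a_{m₁}, a_{m₂} ∈ ℝ² with a_{m₁} ≠ a_{m₂}, and let y_{m₁} ≥ y_{m₂} ≥ 0. Define E = {x ∈ ℝ² : |y_{m₁} − ‖x − a_{m₁}‖| = |y_{m₂} − ‖x − a_{m₂}‖|}, the mean anchor ā = (a_{m₁} + a_{m₂})/2, constants c = ‖a_{m₂} − ā‖, k_E = y_{m₁} + y_{m₂}, k_H = y_{m₁} − y_{m₂}, and let R be the 2×2 rotation matrix by the polar angle θ* of the vector a_{m₂} − ā. Then: (i) if 2c < k_H, E = ā + R·𝓔(c, k_E); (ii) if 2c > k_E, E = ā + R·𝓗₊(c, k_H); (iii) if k_H ≤ 2c ≤ k_E, E = ā + R·(𝓔(c, k_E) ∪ 𝓗₊(c, k_H)), where ā + R·A denotes the image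 of A under the map x ↦ ā + Rx. -/
/-- The plane `ℝ²` as a Euclidean space. -/
abbrev Plane : Type := EuclideanSpace ℝ (Fin 2)

/-- A point of the plane from two coordinates. -/
noncomputable def pt (s t : ℝ) : Plane := WithLp.toLp 2 ![s, t]

/-- The standard ellipse with focal points `(−c, 0)`, `(c, 0)` and string length `k`. -/
noncomputable def stdEllipse (c k : ℝ) : Set Plane :=
  {x | ‖x - pt (-c) 0‖ + ‖x - pt c 0‖ = k}

/-- The standard half-hyperbola with focal points `(−c, 0)`, `(c, 0)` and constant `k`. -/
noncomputable def stdHalfHyperbola (c k : ℝ) : Set Plane :=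
  {x | ‖x - pt (-c) 0‖ - ‖x - pt c 0‖ = k}

/-- Rotation of the plane by angle `θ`. -/
noncomputable def rot (θ : ℝ) (x : Plane) : Plane :=
  pt (Real.cos θ * x 0 - Real.sin θ * x 1) (Real.sin θ * x 0 + Real.cos θ * x 1)

/-! Write `a₁, a₂ = ā ∓ c·u` with `u = (cos θ, sin θ)`. The rigid motion `v ↦ ā + R v` carries the
foci `(∓c, 0)` to `a₁, a₂`, so it pulls `E` back to `{v | |y₁ - d₁| = |y₂ - d₂|}`, `dᵢ` the focal
distances of `v`; that equation says `d₁ + d₂ = k_E` or `d₁ - d₂ = k_H`. By the triangle inequality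
`d₁ + d₂ ≥ 2c ≥ |d₁ - d₂|`, so the half-hyperbola is empty when `2c < k_H` and the ellipse is empty
when `k_E < 2c`. -/

open Real

theorem plane_ext {x y : Plane} (h₀ : x 0 = y 0) (h₁ : x 1 = y 1) : x = y := by
  ext i; fin_cases i <;> assumption

theorem norm_rot (θ : ℝ) (x : Plane) : ‖rot θ x‖ = ‖x‖ := by
  simp only [EuclideanSpace.norm_eq, Fin.sum_univ_two, Real.norm_eq_abs, sq_abs, rot, pt]
  congr 1
  simp only [Matrix.cons_val_zero, Matrix.cons_val_one]
  linear_combination (x 0 ^ 2 + x 1 ^ 2) * sin_sq_add_cos_sq θ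

theorem rot_sub (θ : ℝ) (x y : Plane) : rot θ (x - y) = rot θ x - rot θ y := by
  apply plane_ext <;> simp [rot, pt] <;> ring

theorem rot_pt_zero (θ s : ℝ) : rot θ (pt s 0) = s • pt (cos θ) (sin θ) := by
  apply plane_ext <;> simp [rot, pt] <;> ring

theorem rot_rot_neg (θ : ℝ) (x : Plane) : rot θ (rot (-θ) x) = x := by
  apply plane_ext
  · simp [rot, pt]; linear_combination x 0 * sin_sq_add_cos_sq θ
  · simp [rot, pt]; linear_combination x 1 * sin_sq_add_cos_sq θ

theorem add_rot_surjective (b : Plane) (θ : ℝ) : Function.Surjective fun v => b + rot θ v :=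
  (Equiv.addLeft b).surjective.comp fun x => ⟨rot (-θ) x, rot_rot_neg θ x⟩

theorem norm_add_rot_sub (b v : Plane) (θ s : ℝ) :
    ‖b + rot θ v - (b + s • pt (cos θ) (sin θ))‖ = ‖v - pt s 0‖ := by
  rw [← rot_pt_zero, add_sub_add_left_eq_sub, ← rot_sub, norm_rot]

theorem norm_pt_neg_sub_pt (c : ℝ) : ‖pt (-c) 0 - pt c 0‖ = 2 * |c| := by
  simp only [EuclideanSpace.norm_eq, Fin.sum_univ_two, Real.norm_eq_abs, sq_abs, pt]
  simp only [PiLp.sub_apply, Matrix.cons_val_zero, Matrix.cons_val_one, sub_self]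
  rw [show (-c - c) ^ 2 + 0 ^ 2 = (2 * c) ^ 2 by ring, sqrt_sq_eq_abs, abs_mul, abs_two]

theorem stdEllipse_eq_empty {c k : ℝ} (hk : k < 2 * |c|) : stdEllipse c k = ∅ := by
  refine Set.eq_empty_of_forall_notMem fun v (hv : ‖v - pt (-c) 0‖ + ‖v - pt c 0‖ = k) => ?_
  have := norm_sub_le_norm_sub_add_norm_sub (pt (-c) 0) v (pt c 0)
  rw [norm_pt_neg_sub_pt, norm_sub_rev] at this
  linarith

theorem stdHalfHyperbola_eq_empty {c k : ℝ} (hk : 2 * |c| < k) : stdHalfHyperbola c k = ∅ := by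
  refine Set.eq_empty_of_forall_notMem fun v (hv : ‖v - pt (-c) 0‖ - ‖v - pt c 0‖ = k) => ?_
  have := abs_norm_sub_norm_le (v - pt (-c) 0) (v - pt c 0)
  rw [sub_sub_sub_cancel_left, norm_sub_rev (pt c 0), norm_pt_neg_sub_pt] at this
  linarith [le_abs_self (‖v - pt (-c) 0‖ - ‖v - pt c 0‖)]

theorem abs_sub_eq_abs_sub_iff {a b p q : ℝ} :
    |a - p| = |b - q| ↔ p + q = a + b ∨ p - q = a - b := by
  rw [abs_eq_abs, or_comm]
  apply or_congr <;> constructor <;> intro h <;> linarith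

def equalDeviationSet {V : Type*} [SeminormedAddCommGroup V] (a₁ a₂ : V) (y₁ y₂ : ℝ) : Set V :=
  {x | |y₁ - ‖x - a₁‖| = |y₂ - ‖x - a₂‖|}

theorem preimage_equalDeviationSet (b : Plane) (θ c y₁ y₂ : ℝ) :
    (fun v => b + rot θ v) ⁻¹' equalDeviationSet (b + (-c) • pt (cos θ) (sin θ))
      (b + c • pt (cos θ) (sin θ)) y₁ y₂ = stdEllipse c (y₁ + y₂) ∪ stdHalfHyperbola c (y₁ - y₂) := by
  ext v
  simp only [Set.mem_preimage, equalDeviationSet, Set.mem_ofPred_eq, norm_add_rot_sub,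
    abs_sub_eq_abs_sub_iff]
  rfl

theorem equal_deviation_set_characterization_general
    (a₁ a₂ : Plane) (y₁ y₂ : ℝ)
    (E : Set Plane) (hE : E = {x | |y₁ - ‖x - a₁‖| = |y₂ - ‖x - a₂‖|})
    (abar : Plane) (habar : abar = (2⁻¹ : ℝ) • (a₁ + a₂))
    (c kE kH : ℝ) (hc : c = ‖a₂ - abar‖) (hkE : kE = y₁ + y₂) (hkH : kH = y₁ - y₂)
    (θ : ℝ) (hθ : a₂ - abar = c • pt (Real.cos θ) (Real.sin θ)) :
    (2 * c < kH → E = (fun v => abar + rot θ v) '' stdEllipse c kE) ∧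
    (kE < 2 * c → E = (fun v => abar + rot θ v) '' stdHalfHyperbola c kH) ∧
    (kH ≤ 2 * c → 2 * c ≤ kE →
      E = (fun v => abar + rot θ v) '' (stdEllipse c kE ∪ stdHalfHyperbola c kH)) := by
  have hc₀ : 0 ≤ c := hc ▸ norm_nonneg _
  have ha₂ : a₂ = abar + c • pt (Real.cos θ) (Real.sin θ) := by rw [← hθ]; abel
  have ha₁ : a₁ = abar + (-c) • pt (Real.cos θ) (Real.sin θ) := by
    rw [neg_smul, ← hθ, habar]; module
  have hmain : E = (fun v => abar + rot θ v) '' (stdEllipse c kE ∪ stdHalfHyperbola c kH) := by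
    change E = equalDeviationSet a₁ a₂ y₁ y₂ at hE
    rw [hE, hkE, hkH, ha₁, ha₂, ← preimage_equalDeviationSet,
      Set.image_preimage_eq _ (add_rot_surjective abar θ)]
  refine ⟨fun h => ?_, fun h => ?_, fun _ _ => hmain⟩
  · rw [hmain, stdHalfHyperbola_eq_empty (by rwa [abs_of_nonneg hc₀]), Set.union_empty]
  · rw [hmain, stdEllipse_eq_empty (by rwa [abs_of_nonneg hc₀]), Set.empty_union]

/-- the equal-deviation set `E` is, up to the translation by the mean
anchor `ā` and the rotation by the polar angle of `a₂ − ā`, a standard ellipse, a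
standard half-hyperbola, or the union of both, according to the size of `2c`. -/
theorem equal_deviation_set_characterization
    (a₁ a₂ : Plane) (hne : a₁ ≠ a₂) (y₁ y₂ : ℝ) (hy₂ : 0 ≤ y₂) (hy : y₂ ≤ y₁)
    (E : Set Plane) (hE : E = {x | |y₁ - ‖x - a₁‖| = |y₂ - ‖x - a₂‖|})
    (abar : Plane) (habar : abar = (2⁻¹ : ℝ) • (a₁ + a₂))
    (c kE kH : ℝ) (hc : c = ‖a₂ - abar‖) (hkE : kE = y₁ + y₂) (hkH : kH = y₁ - y₂)
    (θ : ℝ) (hθ : a₂ - abar = c • pt (Real.cos θ) (Real.sin θ)) :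
    (2 * c < kH → E = (fun v => abar + rot θ v) '' stdEllipse c kE) ∧
    (kE < 2 * c → E = (fun v => abar + rot θ v) '' stdHalfHyperbola c kH) ∧
    (kH ≤ 2 * c → 2 * c ≤ kE →
      E = (fun v => abar + rot θ v) '' (stdEllipse c kE ∪ stdHalfHyperbola c kH)) :=
  equal_deviation_set_characterization_general a₁ a₂ y₁ y₂ E hE abar habar c kE kH hc hkE hkH θ hθ
end

section
/- Let a_1, …, a_M ∈ ℝ², y_1, …, y_M ≥ 0, L ∈ {0,…,M−1}, and let F(x) = p_L(|y_1 − ‖x − a_1‖|, …, |y_M − ‖x − a_M‖|). Then for any x̂ ∈ ℝ², every global minimizer x* of F satisfies ‖x*‖ ≤ B(x̂), where B(x̂) = F(x̂) + max_{1 ≤ m ≤ M} (‖a_m‖ + y_m). In particular the set of global minimizers of F is bounded. -/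
/-- any global minimizer of the percentile localization objective has
norm at most `B(x̂) = F(x̂) + max_m (‖a_m‖ + y_m)`, for any point `x̂`. -/
theorem percentile_localization_minimizer_norm_bound
    (M : ℕ) (hM : 0 < M) (a : Fin M → EuclideanSpace ℝ (Fin 2)) (y : Fin M → ℝ)
    (hy : ∀ m, 0 ≤ y m) (L : ℕ) (hL : L < M)
    (F : EuclideanSpace ℝ (Fin 2) → ℝ)
    (hF : ∀ x, F x = percentile L (fun m => |y m - ‖x - a m‖|))
    (xhat : EuclideanSpace ℝ (Fin 2))
    (xstar : EuclideanSpace ℝ (Fin 2)) (hmin : ∀ x, F xstar ≤ F x) :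
    ‖xstar‖ ≤ F xhat + (Finset.univ.sup' ⟨⟨0, hM⟩, Finset.mem_univ _⟩ (fun m => ‖a m‖ + y m)) := by
  set z : Fin M → ℝ := fun m => |y m - ‖xstar - a m‖| with hz
  set m : Fin M := Tuple.sort z ⟨M - 1 - L, by omega⟩ with hm
  have hFxstar : F xstar = z m := by
    rw [hF, percentile, dif_pos hL]
  have h1 : ‖xstar‖ ≤ ‖xstar - a m‖ + ‖a m‖ := by
    calc ‖xstar‖ = ‖(xstar - a m) + a m‖ := by rw [sub_add_cancel]
    _ ≤ ‖xstar - a m‖ + ‖a m‖ := norm_add_le _ _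
  have h2 : ‖xstar - a m‖ ≤ z m + y m := by
    have h : ‖xstar - a m‖ - y m ≤ z m := by
      show ‖xstar - a m‖ - y m ≤ |y m - ‖xstar - a m‖|
      rw [abs_sub_comm]
      exact le_abs_self _
    linarith
  have h3 : z m ≤ F xhat := hFxstar ▸ hmin xhat
  have h4 : ‖a m‖ + y m ≤ Finset.univ.sup' ⟨⟨0, hM⟩, Finset.mem_univ _⟩ (fun m => ‖a m‖ + y m) :=
    Finset.le_sup' (fun m => ‖a m‖ + y m) (Finset.mem_univ m)
  linarith
end

section
/- Let a_1, …, a_M ∈ ℝ², y_1, …, y_M ≥ 0, and L ∈ {0,…,M−1}. Then the function F(x) = p_L(|y_1 − ‖x − a_1‖|, …, |y_M − ‖x − a_M‖|) is coercive (F(x) → +∞ as ‖x‖ → +∞), is continuous on ℝ², and attains its global minimum, i.e., its set of global minimizers is nonempty. -/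
lemma percentile_exists_index {M L : ℕ} (hL : L < M) (z : Fin M → ℝ) :
    ∃ i, percentile L z = z i := by
  rw [percentile, dif_pos hL]
  exact ⟨_, rfl⟩

/-- The nonempty finset of subsets of `Fin M` of cardinality `L+1`, attached. -/
lemma subsets_nonempty {M L : ℕ} (hL : L < M) :
    ((Finset.univ : Finset (Fin M)).powersetCard (L + 1)).attach.Nonempty := by
  rw [Finset.attach_nonempty_iff]
  exact Finset.powersetCard_nonempty.2 (by simpa using hL)

lemma mem_powersetCard_nonempty {M L : ℕ}
    (S : Finset (Fin M)) (hS : S ∈ (Finset.univ : Finset (Fin M)).powersetCard (L + 1)) :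
    S.Nonempty := by
  rw [Finset.mem_powersetCard] at hS
  exact Finset.card_pos.1 (by omega)

/-- Min-max characterization: the `(L+1)`-th largest entry equals the maximum over subsets
of size `L+1` of the minimum over the subset. -/
lemma percentile_eq_sup'_inf' {M L : ℕ} (hL : L < M) (z : Fin M → ℝ) :
    percentile L z =
      ((Finset.univ : Finset (Fin M)).powersetCard (L + 1)).attach.sup' (subsets_nonempty hL)
        (fun S => S.1.inf' (mem_powersetCard_nonempty S.1 S.2) z) := by
  set σ := Tuple.sort z with hσ
  have hmono : Monotone (z ∘ σ) := Tuple.monotone_sort z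
  have hper : percentile L z = z (σ ⟨M - 1 - L, by omega⟩) := by
    rw [percentile, dif_pos hL]
  set k : Fin M := ⟨M - 1 - L, by omega⟩ with hk
  apply le_antisymm
  · -- take S₀ = σ '' Ici k
    have hmem : (Finset.Ici k).image σ ∈
        (Finset.univ : Finset (Fin M)).powersetCard (L + 1) := by
      rw [Finset.mem_powersetCard]
      constructor
      · exact Finset.subset_univ _
      · rw [Finset.card_image_of_injective _ σ.injective, Fin.card_Ici]
        simp only [hk]
        omega
    refine le_trans ?_ (Finset.le_sup' _ (Finset.mem_attach _ ⟨_, hmem⟩))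
    apply Finset.le_inf'
    intro j hj
    simp only [Finset.mem_image, Finset.mem_Ici] at hj
    obtain ⟨i, hi, rfl⟩ := hj
    rw [hper]
    exact hmono hi
  · apply Finset.sup'_le
    rintro ⟨S, hS⟩ -
    rw [Finset.mem_powersetCard] at hS
    -- there is i ∈ S with σ⁻¹ i ≤ k
    have : ∃ j ∈ S, (σ.symm j : Fin M) ≤ k := by
      by_contra h
      push_neg at h
      have hsub : S.image σ.symm ⊆ Finset.Ioi k := by
        intro i hi
        simp only [Finset.mem_image] at hi
        obtain ⟨j, hj, rfl⟩ := hi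
        exact Finset.mem_Ioi.2 (h j hj)
      have := Finset.card_le_card hsub
      rw [Finset.card_image_of_injective _ σ.symm.injective, Fin.card_Ioi, hS.2] at this
      simp only [hk] at this
      omega
    obtain ⟨j, hjS, hjk⟩ := this
    calc S.inf' (mem_powersetCard_nonempty S (Finset.mem_powersetCard.2 hS)) z ≤ z j :=
          Finset.inf'_le _ hjS
      _ = (z ∘ σ) (σ.symm j) := by simp
      _ ≤ (z ∘ σ) k := hmono hjk
      _ = percentile L z := hper.symm

/-- the percentile localization objective is coercive
(`F x → +∞` as `‖x‖ → +∞`), continuous, and attains its global minimum. -/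
theorem percentile_localization_coercive_continuous_attains_min
    (M : ℕ) (a : Fin M → EuclideanSpace ℝ (Fin 2)) (y : Fin M → ℝ)
    (hy : ∀ m, 0 ≤ y m) (L : ℕ) (hL : L < M)
    (F : EuclideanSpace ℝ (Fin 2) → ℝ)
    (hF : ∀ x, F x = percentile L (fun m => |y m - ‖x - a m‖|)) :
    Filter.Tendsto F (Filter.comap (fun x => ‖x‖) Filter.atTop) Filter.atTop ∧
    Continuous F ∧
    (∃ xstar, ∀ x, F xstar ≤ F x) := by
  have hM : 0 < M := Nat.lt_of_le_of_lt (Nat.zero_le L) hL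
  -- coercivity
  have hcoer : Filter.Tendsto F (Filter.comap (fun x => ‖x‖) Filter.atTop) Filter.atTop := by
    obtain ⟨C, hC⟩ : ∃ C, ∀ m : Fin M, ‖a m‖ + y m ≤ C := by
      haveI : Nonempty (Fin M) := ⟨⟨0, hM⟩⟩
      obtain ⟨m₀, hm₀⟩ := Finite.exists_max (fun m : Fin M => ‖a m‖ + y m)
      exact ⟨_, hm₀⟩
    have hlb : ∀ x, ‖x‖ - C ≤ F x := by
      intro x
      obtain ⟨i, hi⟩ := percentile_exists_index hL (fun m => |y m - ‖x - a m‖|)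
      rw [hF, hi]
      have h1 : ‖x - a i‖ - y i ≤ |y i - ‖x - a i‖| := by
        rw [abs_sub_comm]
        exact le_abs_self _
      have h2 : ‖x‖ - ‖a i‖ ≤ ‖x - a i‖ := by
        have := norm_sub_norm_le x (a i)
        linarith
      have := hC i
      linarith
    have h1 : Filter.Tendsto (fun x : EuclideanSpace ℝ (Fin 2) => ‖x‖ - C)
        (Filter.comap (fun x => ‖x‖) Filter.atTop) Filter.atTop :=
      (Filter.tendsto_comap.atTop_add tendsto_const_nhds : _)
    exact Filter.tendsto_atTop_mono hlb h1
  refine ⟨hcoer, ?_, ?_⟩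
  · -- continuity
    have : F = fun x =>
        ((Finset.univ : Finset (Fin M)).powersetCard (L + 1)).attach.sup' (subsets_nonempty hL)
          (fun S => S.1.inf' (mem_powersetCard_nonempty S.1 S.2)
            (fun m => |y m - ‖x - a m‖|)) := by
      funext x
      rw [hF, percentile_eq_sup'_inf' hL]
    rw [this]
    apply Continuous.finset_sup'_apply
    intro S _
    apply Continuous.finset_inf'_apply
    intro m _
    exact (continuous_const.sub ((continuous_id.sub continuous_const).norm)).abs
  · -- minimum attained
    have hcont : Continuous F := by
      have : F = fun x =>
          ((Finset.univ : Finset (Fin M)).powersetCard (L + 1)).attach.sup' (subsets_nonempty hL)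
            (fun S => S.1.inf' (mem_powersetCard_nonempty S.1 S.2)
              (fun m => |y m - ‖x - a m‖|)) := by
        funext x
        rw [hF, percentile_eq_sup'_inf' hL]
      rw [this]
      apply Continuous.finset_sup'_apply
      intro S _
      apply Continuous.finset_inf'_apply
      intro m _
      exact (continuous_const.sub ((continuous_id.sub continuous_const).norm)).abs
    apply hcont.exists_forall_le
    rwa [← Metric.cobounded_eq_cocompact, ← comap_norm_atTop]
end
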